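/- arXiv:2210.11281 — 2 statements merged into one kernel-verified Lean document; each statement's English description precedes it below -/
import Mathlib

section
/- Let H_1, …, H_L be Hermitian n×n complex matrices with Λ := max_{1≤i≤L} ‖H_i‖, let k ≥ 1 and λ ∈ ℂ, and let S^{(2k)} be the (2k)-th order Trotter–Suzuki product formula for H_1, …, H_L. Then the Taylor remainder beyond order 2k (as a series in λ) of S^{(2k)}(λ/2) satisfies ‖R_{2k}(S^{(2k)}(λ/2))‖ ≤ ((|λ|[2·5^{k−1}(L−1)+1]Λ/2)^{2k+1} / (2k+1)!) · exp(|λ|[2·5^{k−1}(L−1)+1]Λ/2). -/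
open scoped Nat Matrix.Norms.L2Operator

/-- The coefficient `p_k := 1 / (4 − 4^{1/(2k−1)})` in the recursive Trotter–Suzuki
construction. -/
noncomputable def suzukiP (k : ℕ) : ℝ :=
  1 / (4 - (4 : ℝ) ^ ((1 : ℝ) / (2 * (k : ℝ) - 1)))

/-- The `(2k)`-th order Trotter–Suzuki product formula `S^{(2k)}(λ)` for the Hermitian matrices
`H_1, …, H_L`: `suzuki H k λ = S^{(2k)}(λ)`, defined by
`S^{(2)}(λ) := ∏_{i=1}^L e^{λ H_i/2} · ∏_{i=L}^1 e^{λ H_i/2}` and, for `k ≥ 2`,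
`S^{(2k)}(λ) := [S^{(2k−2)}(p_k λ)]^2 · S^{(2k−2)}((1−4p_k)λ) · [S^{(2k−2)}(p_k λ)]^2`. -/
noncomputable def suzuki {n L : ℕ} (H : Fin L → Matrix (Fin n) (Fin n) ℂ) :
    ℕ → ℂ → Matrix (Fin n) (Fin n) ℂ
  | 0, _ => 1
  | 1, lam =>
      (List.ofFn fun i : Fin L => NormedSpace.exp ((lam / 2) • H i)).prod *
        (List.ofFn fun i : Fin L => NormedSpace.exp ((lam / 2) • H i.rev)).prod
  | k + 2, lam =>
      suzuki H (k + 1) ((suzukiP (k + 2) : ℂ) * lam) ^ 2 *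
        suzuki H (k + 1) ((1 - 4 * (suzukiP (k + 2) : ℂ)) * lam) *
          suzuki H (k + 1) ((suzukiP (k + 2) : ℂ) * lam) ^ 2

/-!
Say that `f` is exp-majorized with constant `a` when its Taylor coefficients at `0` satisfy
`‖C j‖ ≤ a ^ j / j !`. The exponential `μ ↦ exp (μ B)` is exp-majorized with constant `‖B‖`,
constants add under pointwise products (Cauchy product and the binomial theorem) and scale by
`‖c‖` under `μ ↦ c μ`. Hence `S^{(2)}` has constant `L Λ`, and each Suzuki step multiplies the
constant by `4 p_k + |1 - 4 p_k| ≤ 3`, since `0 < p_k ≤ 1/2`; this stays below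
`(2·5^{k-1}(L-1)+1) Λ` when `L ≥ 2`, while for `L = 1` all factors commute and
`S^{(2k)}(μ) = exp (μ H_1)`. Finally the tail of a series with such coefficients is dominated by
the tail of the exponential series, `∑ r^{N+j}/(N+j)! ≤ r^N/N! · e^r`.
-/

theorem add_pow_div_factorial {R : Type*} [Field R] [CharZero R] (a b : R) (n : ℕ) :
    (a + b) ^ n / n ! = ∑ i ∈ Finset.range (n + 1), a ^ i / i ! * (b ^ (n - i) / (n - i)!) := by
  rw [add_pow, Finset.sum_div]
  refine Finset.sum_congr rfl fun i hi => ?_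
  rw [Nat.cast_choose R (Finset.mem_range_succ_iff.mp hi)]
  have hn : (n ! : R) ≠ 0 := Nat.cast_ne_zero.mpr n.factorial_ne_zero
  field_simp

section PowerSeries

variable {𝕜 E : Type*} [NontriviallyNormedField 𝕜] [NormedAddCommGroup E] [NormedSpace 𝕜 E]

theorem eq_of_hasSum_pow_smul {f : 𝕜 → E} {C D : ℕ → E}
    (hC : ∀ μ, HasSum (fun j => μ ^ j • C j) (f μ))
    (hD : ∀ μ, HasSum (fun j => μ ^ j • D j) (f μ)) : C = D := by
  let series (C : ℕ → E) : FormalMultilinearSeries 𝕜 𝕜 E :=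
    fun j => ContinuousMultilinearMap.mkPiRing 𝕜 (Fin j) (C j)
  have hasFPowerSeriesAt {C : ℕ → E} (hC : ∀ μ, HasSum (fun j => μ ^ j • C j) (f μ)) :
      HasFPowerSeriesAt f (series C) 0 :=
    hasFPowerSeriesAt_iff.mpr <| Filter.Eventually.of_forall fun μ => by
      simpa [series, FormalMultilinearSeries.coeff] using hC μ
  have heq := (hasFPowerSeriesAt hC).eq_formalMultilinearSeries (hasFPowerSeriesAt hD)
  funext j
  simpa [series, FormalMultilinearSeries.coeff] using congrArg (fun p => p.coeff j) heq

theorem norm_pow_smul_le_of_norm_le {C : ℕ → E} {a : ℝ} (hC : ∀ j, ‖C j‖ ≤ a ^ j / j !)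
    (μ : 𝕜) (j : ℕ) : ‖μ ^ j • C j‖ ≤ (‖μ‖ * a) ^ j / j ! := by
  rw [norm_smul, norm_pow, mul_pow, mul_div_assoc]
  exact mul_le_mul_of_nonneg_left (hC j) (by positivity)

theorem summable_norm_pow_smul_of_norm_le {C : ℕ → E} {a : ℝ} (hC : ∀ j, ‖C j‖ ≤ a ^ j / j !)
    (μ : 𝕜) : Summable fun j => ‖μ ^ j • C j‖ :=
  (Real.summable_pow_div_factorial (‖μ‖ * a)).of_nonneg_of_le (fun _ => norm_nonneg _)
    (norm_pow_smul_le_of_norm_le hC μ)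

theorem norm_tsum_pow_add_smul_le {C : ℕ → E} {a : ℝ} (ha : 0 ≤ a)
    (hC : ∀ j, ‖C j‖ ≤ a ^ j / j !) (μ : 𝕜) (N : ℕ) :
    ‖∑' j, μ ^ (N + j) • C (N + j)‖ ≤ (‖μ‖ * a) ^ N / N ! * Real.exp (‖μ‖ * a) := by
  set r := ‖μ‖ * a
  have hexp : HasSum (fun j => r ^ j / j !) (Real.exp r) := by
    simpa [Real.exp_eq_exp_ℝ] using NormedSpace.expSeries_div_hasSum_exp r
  refine tsum_of_norm_bounded (hexp.mul_left (r ^ N / N !)) fun j => ?_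
  have hfac : (N ! * j ! : ℝ) ≤ (N + j)! := by
    exact_mod_cast Nat.le_of_dvd (Nat.factorial_pos _)
      (Nat.factorial_mul_factorial_dvd_factorial_add N j)
  calc ‖μ ^ (N + j) • C (N + j)‖ ≤ r ^ (N + j) / (N + j)! := norm_pow_smul_le_of_norm_le hC μ _
    _ ≤ r ^ (N + j) / (N ! * j !) := by gcongr
    _ = r ^ N / N ! * (r ^ j / j !) := by ring

end PowerSeries

section ExpMajorized

variable {𝕜 A : Type*} [RCLike 𝕜] [NormedRing A] [NormedAlgebra 𝕜 A] {f g : 𝕜 → A} {a b : ℝ}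

def ExpMajorized (f : 𝕜 → A) (a : ℝ) : Prop :=
  0 ≤ a ∧ ∃ D : ℕ → A, (∀ μ, HasSum (fun j => μ ^ j • D j) (f μ)) ∧ ∀ j, ‖D j‖ ≤ a ^ j / j !

namespace ExpMajorized

theorem nonneg (hf : ExpMajorized f a) : 0 ≤ a := hf.1

theorem norm_coeff_le (hf : ExpMajorized f a) {C : ℕ → A}
    (hC : ∀ μ, HasSum (fun j => μ ^ j • C j) (f μ)) (j : ℕ) : ‖C j‖ ≤ a ^ j / j ! := by
  obtain ⟨-, D, hD, hDle⟩ := hf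
  rw [eq_of_hasSum_pow_smul hC hD]
  exact hDle j

theorem mono (hf : ExpMajorized f a) (hab : a ≤ b) : ExpMajorized f b := by
  obtain ⟨ha, D, hD, hDle⟩ := hf
  exact ⟨ha.trans hab, D, hD, fun j => (hDle j).trans (by gcongr)⟩

theorem congr (hf : ExpMajorized f a) (hfg : ∀ μ, f μ = g μ) : ExpMajorized g a := by
  obtain ⟨ha, D, hD, hDle⟩ := hf
  exact ⟨ha, D, fun μ => hfg μ ▸ hD μ, hDle⟩

theorem comp_mul (hf : ExpMajorized f a) (c : 𝕜) :
    ExpMajorized (fun μ => f (c * μ)) (‖c‖ * a) := by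
  obtain ⟨ha, D, hD, hDle⟩ := hf
  refine ⟨by positivity, fun j => c ^ j • D j, fun μ => ?_, norm_pow_smul_le_of_norm_le hDle c⟩
  simpa only [smul_smul, mul_pow, mul_comm] using hD (c * μ)

end ExpMajorized

theorem expMajorized_one (hone : ‖(1 : A)‖ ≤ 1) : ExpMajorized (fun _ : 𝕜 => (1 : A)) 0 := by
  refine ⟨le_rfl, Pi.single 0 1, fun μ => ?_, fun j => ?_⟩
  · convert hasSum_single (f := fun j => μ ^ j • (Pi.single 0 1 : ℕ → A) j) 0 fun j hj => ?_
    · simp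
    · simp [hj]
  · rcases j with _ | j
    · simpa using hone
    · simp

variable [CompleteSpace A]

theorem ExpMajorized.mul (hf : ExpMajorized f a) (hg : ExpMajorized g b) :
    ExpMajorized (fun μ => f μ * g μ) (a + b) := by
  obtain ⟨ha, D, hD, hDle⟩ := hf
  obtain ⟨hb, E, hE, hEle⟩ := hg
  refine ⟨add_nonneg ha hb, fun n => ∑ i ∈ Finset.range (n + 1), D i * E (n - i),
    fun μ => ?_, fun n => ?_⟩
  · have hDs := summable_norm_pow_smul_of_norm_le hDle μ
    have hEs := summable_norm_pow_smul_of_norm_le hEle μ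
    have hterm (n : ℕ) : ∑ i ∈ Finset.range (n + 1), (μ ^ i • D i) * (μ ^ (n - i) • E (n - i)) =
        μ ^ n • ∑ i ∈ Finset.range (n + 1), D i * E (n - i) := by
      rw [Finset.smul_sum]
      refine Finset.sum_congr rfl fun i hi => ?_
      rw [smul_mul_smul_comm, ← pow_add, Nat.add_sub_cancel' (Finset.mem_range_succ_iff.mp hi)]
    have hprod := (summable_sum_mul_range_of_summable_norm' hDs hDs.of_norm hEs hEs.of_norm).hasSum
    rw [← tsum_mul_tsum_eq_tsum_sum_range_of_summable_norm hDs hEs, (hD μ).tsum_eq,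
      (hE μ).tsum_eq] at hprod
    simpa only [hterm] using hprod
  · calc ‖∑ i ∈ Finset.range (n + 1), D i * E (n - i)‖
        ≤ ∑ i ∈ Finset.range (n + 1), a ^ i / i ! * (b ^ (n - i) / (n - i)!) :=
          (norm_sum_le _ _).trans <| Finset.sum_le_sum fun i _ => (norm_mul_le _ _).trans <|
            mul_le_mul (hDle i) (hEle (n - i)) (norm_nonneg _) (by positivity)
      _ = (a + b) ^ n / n ! := (add_pow_div_factorial a b n).symm

theorem expMajorized_exp_smul (hone : ‖(1 : A)‖ ≤ 1) (B : A) :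
    ExpMajorized (fun μ : 𝕜 => NormedSpace.exp (μ • B)) ‖B‖ := by
  refine ⟨norm_nonneg B, fun j => (j ! : 𝕜)⁻¹ • B ^ j, fun μ => ?_, fun j => ?_⟩
  · simpa only [smul_pow, smul_comm (μ ^ _)] using
      NormedSpace.exp_series_hasSum_exp' (𝕂 := 𝕜) (μ • B)
  · rw [norm_smul, norm_inv, RCLike.norm_natCast, inv_mul_eq_div]
    gcongr
    rcases j with _ | j
    · simpa using hone
    · exact norm_pow_le' B (Nat.succ_pos j)

theorem expMajorized_prod_exp_smul (hone : ‖(1 : A)‖ ≤ 1) {m : ℕ} {B : Fin m → A} {c : ℝ}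
    (hB : ∀ i, ‖B i‖ ≤ c) :
    ExpMajorized (fun μ : 𝕜 => (List.ofFn fun i => NormedSpace.exp (μ • B i)).prod) (m * c) := by
  induction m with
  | zero => simpa using expMajorized_one hone
  | succ m ih =>
    have hprod := ((expMajorized_exp_smul hone (B 0)).mono (hB 0)).mul
      (ih (B := fun i => B i.succ) fun i => hB i.succ)
    refine (hprod.congr fun μ => by rw [List.ofFn_succ, List.prod_cons]).mono (le_of_eq ?_)
    push_cast
    ring

end ExpMajorized

theorem suzukiP_mem_Ioc {k : ℕ} (hk : 2 ≤ k) : suzukiP k ∈ Set.Ioc 0 2⁻¹ := by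
  have hexponent : (1 : ℝ) / (2 * k - 1) ≤ 1 / 2 := by
    gcongr
    linarith [show (2 : ℝ) ≤ k by exact_mod_cast hk]
  have hsqrt4 : (4 : ℝ) ^ ((1 : ℝ) / 2) = 2 := by
    rw [show (4 : ℝ) = 2 ^ (2 : ℝ) by norm_num, ← Real.rpow_mul zero_le_two]
    norm_num
  have hpow : (4 : ℝ) ^ ((1 : ℝ) / (2 * k - 1)) ≤ 2 :=
    (Real.rpow_le_rpow_of_exponent_le (by norm_num) hexponent).trans_eq hsqrt4
  unfold suzukiP
  constructor
  · exact one_div_pos.mpr (by linarith)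
  · rw [← one_div]
    exact one_div_le_one_div_of_le two_pos (by linarith)

section Suzuki

variable {n L : ℕ} {H : Fin L → Matrix (Fin n) (Fin n) ℂ} {Λ : ℝ}

theorem Matrix.l2_opNorm_one_le : ‖(1 : Matrix (Fin n) (Fin n) ℂ)‖ ≤ 1 := by
  rw [Matrix.cstar_norm_def, map_one, ContinuousLinearMap.one_def]
  exact ContinuousLinearMap.norm_id_le

theorem suzuki_of_fin_one (H : Fin 1 → Matrix (Fin n) (Fin n) ℂ) (k : ℕ) (μ : ℂ) :
    suzuki H (k + 1) μ = NormedSpace.exp (μ • H 0) := by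
  have exp_smul_mul_exp_smul (a b : ℂ) : NormedSpace.exp (a • H 0) * NormedSpace.exp (b • H 0) =
      NormedSpace.exp ((a + b) • H 0) := by
    rw [add_smul, Matrix.exp_add_of_commute _ _ (((Commute.refl _).smul_left a).smul_right b)]
  induction k generalizing μ with
  | zero =>
    simp only [suzuki, List.ofFn_succ, List.ofFn_zero, List.prod_cons, List.prod_nil, mul_one,
      Fin.rev_zero, Fin.last_zero, exp_smul_mul_exp_smul, add_halves]
  | succ k ih =>
    simp only [suzuki, ih, sq, exp_smul_mul_exp_smul]
    ring_nf

theorem expMajorized_suzuki_one (hΛ : ∀ i, ‖H i‖ ≤ Λ) : ExpMajorized (suzuki H 1) (L * Λ) := by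
  have hhalf {B : Fin L → Matrix (Fin n) (Fin n) ℂ} (hB : ∀ i, ‖B i‖ ≤ Λ) :=
    (expMajorized_prod_exp_smul Matrix.l2_opNorm_one_le hB).comp_mul (2⁻¹ : ℂ)
  refine ((hhalf hΛ).mul (hhalf fun i => hΛ i.rev)).congr (fun μ => ?_) |>.mono (le_of_eq ?_)
  · simp only [suzuki, inv_mul_eq_div]
  · rw [norm_inv, Complex.norm_two]
    ring

theorem expMajorized_suzuki_succ {k : ℕ} {a : ℝ} (hS : ExpMajorized (suzuki H (k + 1)) a) :
    ExpMajorized (suzuki H (k + 2)) (3 * a) := by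
  obtain ⟨hp0, hp⟩ := suzukiP_mem_Ioc (show 2 ≤ k + 2 by omega)
  set p := suzukiP (k + 2)
  have hsq := (hS.comp_mul (p : ℂ)).mul (hS.comp_mul (p : ℂ))
  have hstep := (hsq.mul (hS.comp_mul (1 - 4 * (p : ℂ)))).mul hsq
  refine (hstep.congr fun μ => by simp only [suzuki, sq]; rfl).mono ?_
  have hmid : ‖1 - 4 * (p : ℂ)‖ ≤ 1 := by
    rw [show 1 - 4 * (p : ℂ) = ((1 - 4 * p : ℝ) : ℂ) by push_cast; rfl, Complex.norm_real,
      Real.norm_eq_abs, abs_le]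
    constructor <;> linarith
  rw [Complex.norm_real, Real.norm_of_nonneg hp0.le]
  nlinarith [hS.nonneg]

theorem expMajorized_suzuki (hL : 1 ≤ L) (hΛ : ∀ i, ‖H i‖ ≤ Λ) (k : ℕ) :
    ExpMajorized (suzuki H k) ((2 * 5 ^ (k - 1) * ((L : ℝ) - 1) + 1) * Λ) := by
  have hΛ0 : 0 ≤ Λ := (norm_nonneg _).trans (hΛ ⟨0, hL⟩)
  rcases k with _ | k
  · have hL1 : (1 : ℝ) ≤ L := by exact_mod_cast hL
    exact (expMajorized_one Matrix.l2_opNorm_one_le).mono (by positivity)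
  obtain rfl | hL2 := hL.eq_or_lt
  · refine ((expMajorized_exp_smul Matrix.l2_opNorm_one_le (H 0)).mono (hΛ 0)).congr
      (fun μ => (suzuki_of_fin_one H k μ).symm) |>.mono (le_of_eq ?_)
    simp
  have hL2 : (2 : ℝ) ≤ L := by exact_mod_cast hL2
  induction k with
  | zero => exact (expMajorized_suzuki_one hΛ).mono (by norm_num; nlinarith)
  | succ k ih =>
    refine (expMajorized_suzuki_succ ih).mono ?_
    simp only [Nat.add_sub_cancel, pow_succ]
    have h5 : (1 : ℝ) ≤ 5 ^ k := one_le_pow₀ (by norm_num)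
    nlinarith [mul_le_mul h5 (by linarith : (1 : ℝ) ≤ L - 1) zero_le_one (by positivity)]

end Suzuki

theorem opNorm_remainder_suzuki_half_le_general {n L : ℕ}
    (H : Fin L → Matrix (Fin n) (Fin n) ℂ)
    (Λ : ℝ) (hΛ : IsGreatest (Set.range fun i => ‖H i‖) Λ)
    (k : ℕ) (lam : ℂ)
    (C : ℕ → Matrix (Fin n) (Fin n) ℂ)
    (hC : ∀ μ : ℂ, HasSum (fun j : ℕ => μ ^ j • C j) (suzuki H k (μ / 2))) :
    ‖∑' j : ℕ, lam ^ (2 * k + 1 + j) • C (2 * k + 1 + j)‖ ≤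
      (‖lam‖ * (2 * 5 ^ (k - 1) * ((L : ℝ) - 1) + 1) * Λ / 2) ^ (2 * k + 1) /
          ((2 * k + 1)! : ℝ) *
        Real.exp (‖lam‖ * (2 * 5 ^ (k - 1) * ((L : ℝ) - 1) + 1) * Λ / 2) := by
  obtain ⟨⟨i₀, -⟩, hΛle⟩ := hΛ
  have hS := (expMajorized_suzuki i₀.pos (fun i => hΛle ⟨i, rfl⟩) k).comp_mul (2⁻¹ : ℂ)
    |>.congr fun μ => by rw [inv_mul_eq_div]
  have hbound := norm_tsum_pow_add_smul_le hS.nonneg (hS.norm_coeff_le hC) lam (2 * k + 1)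
  rw [norm_inv, Complex.norm_two] at hbound
  convert hbound using 3 <;> ring

/-- Let `H_1, …, H_L` (`L ≥ 1`) be Hermitian `n×n` complex matrices with
`Λ := max_i ‖H_i‖` (operator norm), let `k ≥ 1` and `λ ∈ ℂ`, and let
`S^{(2k)}(λ/2) = Σ_{j=0}^∞ λ^j C_j` be the power series (in `λ`) of the `(2k)`-th order
Trotter–Suzuki formula evaluated at `λ/2`. Then the Taylor remainder beyond order `2k`
satisfies `‖R_{2k}(S^{(2k)}(λ/2))‖ ≤ ((|λ|[2·5^{k−1}(L−1)+1]Λ/2)^{2k+1} / (2k+1)!) ·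
exp(|λ|[2·5^{k−1}(L−1)+1]Λ/2)`. -/
theorem opNorm_remainder_suzuki_half_le {n L : ℕ} (hL : 1 ≤ L)
    (H : Fin L → Matrix (Fin n) (Fin n) ℂ) (hH : ∀ i, (H i).IsHermitian)
    (Λ : ℝ) (hΛ : IsGreatest (Set.range fun i => ‖H i‖) Λ)
    (k : ℕ) (hk : 1 ≤ k) (lam : ℂ)
    (C : ℕ → Matrix (Fin n) (Fin n) ℂ)
    (hC : ∀ μ : ℂ, HasSum (fun j : ℕ => μ ^ j • C j) (suzuki H k (μ / 2))) :
    ‖∑' j : ℕ, lam ^ (2 * k + 1 + j) • C (2 * k + 1 + j)‖ ≤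
      (‖lam‖ * (2 * 5 ^ (k - 1) * ((L : ℝ) - 1) + 1) * Λ / 2) ^ (2 * k + 1) /
          ((2 * k + 1)! : ℝ) *
        Real.exp (‖lam‖ * (2 * 5 ^ (k - 1) * ((L : ℝ) - 1) + 1) * Λ / 2) :=
  opNorm_remainder_suzuki_half_le_general H Λ hΛ k lam C hC
end

section
/- Let H_1, …, H_L be Hermitian n×n complex matrices with Λ := max_{1≤i≤L} ‖H_i‖, let k ≥ 1, λ ∈ ℂ, κ := 2·5^{k−1}, and let D(λ/2) := R_{2k}(exp(λ Σ_{i=1}^L H_i / 2)) − R_{2k}(S^{(2k)}(λ/2)) be the difference of the Taylor remainders beyond order 2k of the exact exponential and of the (2k)-th order Trotter–Suzuki formula. Then ‖D(λ/2)‖ ≤ 2 (κ|λ|LΛ/2)^{2k+1} / (2k+1)! · exp(κ|λ|LΛ/2). -/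
open scoped Nat Matrix.Norms.L2Operator
open scoped Matrix

/-!
Call a function `F : ℂ → E` exp-bounded with weight `w` if `F μ = ∑ μ^j A_j` for all `μ` with
`‖A_j‖ ≤ w^j / j!`. The exponential `μ ↦ e^{μ M}` is exp-bounded with weight `‖M‖`, rescaling
`μ ↦ c μ` multiplies the weight by `|c|`, and by the binomial theorem the Cauchy product of two
exp-bounded functions is exp-bounded with the sum of the weights. Since `0 ≤ p_k ≤ 1/2`, all
rescalings in the Suzuki recursion have `|c| ≤ 1`, so `S^{(2k)}` is exp-bounded with weight
`5^{k-1} L Λ`, and by uniqueness of power-series coefficients so is the series `Σ μ^j C_j`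
with weight `5^{k-1} L Λ / 2`. Both remainders in `D(λ/2)` are then tails of series dominated by
`Σ x^j / j!` with `x = κ |λ| L Λ / 2`, each at most `x^{2k+1}/(2k+1)! · e^x`.
-/

section PowerSeries

variable {𝕜 E : Type*} [NontriviallyNormedField 𝕜] [NormedAddCommGroup E] [NormedSpace 𝕜 E]

theorem hasFPowerSeriesOnBall_of_hasSum_pow_smul {f : 𝕜 → E} {A : ℕ → E}
    (hA : ∀ z, HasSum (fun j => z ^ j • A j) (f z)) :
    HasFPowerSeriesOnBall f (fun j => ContinuousMultilinearMap.mkPiRing 𝕜 (Fin j) (A j)) 0 1 where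
  r_le := by
    refine FormalMultilinearSeries.le_radius_of_tendsto _ (l := 0) ?_
    simpa using (hA 1).summable.tendsto_atTop_zero.norm
  r_pos := one_pos
  hasSum {y} _ := by simpa using hA y

theorem coeffs_eq_of_hasSum_pow_smul {f : 𝕜 → E} {A B : ℕ → E}
    (hA : ∀ z, HasSum (fun j => z ^ j • A j) (f z))
    (hB : ∀ z, HasSum (fun j => z ^ j • B j) (f z)) : A = B := by
  have h := (hasFPowerSeriesOnBall_of_hasSum_pow_smul hA).hasFPowerSeriesAt
    |>.eq_formalMultilinearSeries (hasFPowerSeriesOnBall_of_hasSum_pow_smul hB).hasFPowerSeriesAt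
  funext j
  simpa using congrArg (fun p : FormalMultilinearSeries 𝕜 𝕜 E => p j fun _ => 1) h

end PowerSeries

theorem Real.tsum_pow_add_div_factorial_le {x : ℝ} (hx : 0 ≤ x) (m : ℕ) :
    ∑' j : ℕ, x ^ (m + j) / (m + j)! ≤ x ^ m / m ! * Real.exp x := by
  have hterm (j : ℕ) : x ^ (m + j) / (m + j)! ≤ x ^ m / m ! * (x ^ j / j !) := by
    rw [div_mul_div_comm, ← pow_add]
    gcongr
    exact_mod_cast Nat.le_of_dvd (Nat.factorial_pos _)
      (Nat.factorial_mul_factorial_dvd_factorial_add m j)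
  calc ∑' j : ℕ, x ^ (m + j) / (m + j)! ≤ ∑' j : ℕ, x ^ m / m ! * (x ^ j / j !) :=
        ((Real.summable_pow_div_factorial x).comp_injective (add_right_injective m)).tsum_le_tsum
          hterm ((Real.summable_pow_div_factorial x).mul_left _)
    _ = x ^ m / m ! * Real.exp x := by
        rw [tsum_mul_left, Real.exp_eq_exp_ℝ, NormedSpace.exp_eq_tsum_div]

theorem norm_tsum_add_le_of_norm_le_pow_div_factorial {E : Type*} [SeminormedAddCommGroup E]
    {A : ℕ → E} {x : ℝ} (hx : 0 ≤ x) (hA : ∀ j, ‖A j‖ ≤ x ^ j / j !) (m : ℕ) :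
    ‖∑' j : ℕ, A (m + j)‖ ≤ x ^ m / m ! * Real.exp x :=
  (tsum_of_norm_bounded ((Real.summable_pow_div_factorial x).comp_injective
    (add_right_injective m)).hasSum fun j => hA (m + j)).trans
    (Real.tsum_pow_add_div_factorial_le hx m)

theorem norm_tsum_add_sub_tsum_add_le {E : Type*} [SeminormedAddCommGroup E] {A B : ℕ → E}
    {x : ℝ} (hx : 0 ≤ x) (hA : ∀ j, ‖A j‖ ≤ x ^ j / j !) (hB : ∀ j, ‖B j‖ ≤ x ^ j / j !)
    (m : ℕ) : ‖∑' j : ℕ, A (m + j) - ∑' j : ℕ, B (m + j)‖ ≤ 2 * x ^ m / m ! * Real.exp x := by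
  calc _ ≤ x ^ m / m ! * Real.exp x + x ^ m / m ! * Real.exp x :=
        (norm_sub_le _ _).trans (add_le_add
          (norm_tsum_add_le_of_norm_le_pow_div_factorial hx hA m)
          (norm_tsum_add_le_of_norm_le_pow_div_factorial hx hB m))
    _ = 2 * x ^ m / m ! * Real.exp x := by ring

theorem add_pow_div_factorial_s5 (w v : ℝ) (j : ℕ) :
    (w + v) ^ j / j ! = ∑ p ∈ Finset.range (j + 1), w ^ p / p ! * (v ^ (j - p) / (j - p)!) := by
  rw [add_pow, Finset.sum_div]
  refine Finset.sum_congr rfl fun p hp => ?_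
  have hfac : (j.choose p : ℝ) * p ! * (j - p)! = j ! := by
    exact_mod_cast Nat.choose_mul_factorial_mul_factorial (Finset.mem_range_succ_iff.mp hp)
  field_simp
  rw [← hfac]
  ring

section ExpBounded

variable {E : Type*} [NormedRing E] [NormedAlgebra ℂ E]

structure HasExpBoundedCoeffs (F : ℂ → E) (A : ℕ → E) (w : ℝ) : Prop where
  hasSum : ∀ μ : ℂ, HasSum (fun j => μ ^ j • A j) (F μ)
  norm_le : ∀ j, ‖A j‖ ≤ w ^ j / j !

namespace HasExpBoundedCoeffs

variable {F G : ℂ → E} {A B : ℕ → E} {w v : ℝ}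

theorem summable_norm (h : HasExpBoundedCoeffs F A w) (μ : ℂ) :
    Summable fun j => ‖μ ^ j • A j‖ := by
  refine (Real.summable_pow_div_factorial (‖μ‖ * w)).of_nonneg_of_le (fun _ => norm_nonneg _)
    fun j => ?_
  rw [norm_smul, norm_pow, mul_pow, mul_div_assoc]
  exact mul_le_mul_of_nonneg_left (h.norm_le j) (by positivity)

theorem mono (h : HasExpBoundedCoeffs F A w) (hw : 0 ≤ w) (hwv : w ≤ v) :
    HasExpBoundedCoeffs F A v :=
  ⟨h.hasSum, fun j => (h.norm_le j).trans (by gcongr)⟩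

theorem comp_mul (h : HasExpBoundedCoeffs F A w) (c : ℂ) :
    HasExpBoundedCoeffs (fun μ => F (c * μ)) (fun j => c ^ j • A j) (‖c‖ * w) := by
  refine ⟨fun μ => ?_, fun j => ?_⟩
  · convert h.hasSum (c * μ) using 2 with j
    rw [mul_pow, mul_smul, smul_comm]
  · rw [norm_smul, norm_pow, mul_pow, mul_div_assoc]
    exact mul_le_mul_of_nonneg_left (h.norm_le j) (by positivity)

theorem mul (hA : HasExpBoundedCoeffs F A w) (hB : HasExpBoundedCoeffs G B v) :
    HasExpBoundedCoeffs (fun μ => F μ * G μ)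
      (fun j => ∑ p ∈ Finset.range (j + 1), A p * B (j - p)) (w + v) := by
  refine ⟨fun μ => ?_, fun j => ?_⟩
  · have H := hasSum_sum_range_mul_of_summable_norm' (hA.summable_norm μ) (hA.hasSum μ).summable
      (hB.summable_norm μ) (hB.hasSum μ).summable
    rw [(hA.hasSum μ).tsum_eq, (hB.hasSum μ).tsum_eq] at H
    convert H using 2 with j
    rw [Finset.smul_sum]
    refine Finset.sum_congr rfl fun p hp => ?_
    rw [smul_mul_smul_comm, ← pow_add, Nat.add_sub_cancel' (Finset.mem_range_succ_iff.mp hp)]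
  · calc ‖∑ p ∈ Finset.range (j + 1), A p * B (j - p)‖
        ≤ ∑ p ∈ Finset.range (j + 1), ‖A p‖ * ‖B (j - p)‖ :=
          (norm_sum_le _ _).trans (Finset.sum_le_sum fun _ _ => norm_mul_le _ _)
      _ ≤ ∑ p ∈ Finset.range (j + 1), w ^ p / p ! * (v ^ (j - p) / (j - p)!) :=
          Finset.sum_le_sum fun p _ => mul_le_mul (hA.norm_le p) (hB.norm_le _) (norm_nonneg _)
            ((norm_nonneg _).trans (hA.norm_le p))
      _ = (w + v) ^ j / j ! := (add_pow_div_factorial_s5 w v j).symm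

theorem congr (h : HasExpBoundedCoeffs F A w) (hFG : ∀ μ, F μ = G μ) :
    HasExpBoundedCoeffs G A w := by
  rwa [← funext hFG]

theorem of_hasSum (h : HasExpBoundedCoeffs F A w)
    (hB : ∀ μ : ℂ, HasSum (fun j => μ ^ j • B j) (F μ)) : HasExpBoundedCoeffs F B w := by
  obtain rfl := coeffs_eq_of_hasSum_pow_smul h.hasSum hB
  exact h

end HasExpBoundedCoeffs

theorem hasExpBoundedCoeffs_one (h1 : ‖(1 : E)‖ ≤ 1) :
    HasExpBoundedCoeffs (fun _ => (1 : E)) (Pi.single 0 1) 0 := by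
  refine ⟨fun μ => ?_, fun j => ?_⟩
  · simpa using hasSum_single (f := fun j => μ ^ j • (Pi.single 0 1 : ℕ → E) j) 0
      fun j hj => by simp [hj]
  · rcases eq_or_ne j 0 with rfl | hj
    · simpa using h1
    · simp [hj]

theorem hasExpBoundedCoeffs_exp [CompleteSpace E] (h1 : ‖(1 : E)‖ ≤ 1) (M : E) :
    HasExpBoundedCoeffs (fun μ => NormedSpace.exp (μ • M)) (fun j => (j ! : ℂ)⁻¹ • M ^ j)
      ‖M‖ := by
  refine ⟨fun μ => ?_, fun j => ?_⟩
  · convert NormedSpace.exp_series_hasSum_exp' (𝕂 := ℂ) (μ • M) using 2 with j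
    rw [smul_pow, smul_comm]
  · rw [norm_smul, norm_inv, Complex.norm_natCast, inv_mul_le_iff₀ (by positivity),
      mul_div_cancel₀ _ (by positivity)]
    rcases eq_or_ne j 0 with rfl | hj
    · simpa using h1
    · exact norm_pow_le' M (Nat.pos_of_ne_zero hj)

theorem hasExpBoundedCoeffs_prod_ofFn (h1 : ‖(1 : E)‖ ≤ 1) {L : ℕ} (F : Fin L → ℂ → E)
    (w : Fin L → ℝ) (hF : ∀ i, ∃ A, HasExpBoundedCoeffs (F i) A (w i)) :
    ∃ A, HasExpBoundedCoeffs (fun μ => (List.ofFn fun i => F i μ).prod) A (∑ i, w i) := by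
  induction L with
  | zero => exact ⟨_, by simpa using hasExpBoundedCoeffs_one h1⟩
  | succ L ih =>
    obtain ⟨A, hA⟩ := hF 0
    obtain ⟨B, hB⟩ := ih (fun i => F i.succ) (fun i => w i.succ) fun i => hF i.succ
    exact ⟨_, by simpa [List.ofFn_succ, Fin.sum_univ_succ] using hA.mul hB⟩

end ExpBounded

theorem CStarRing.norm_one_le {E : Type*} [NormedRing E] [StarRing E]
    [CStarRing E] : ‖(1 : E)‖ ≤ 1 := by
  rcases subsingleton_or_nontrivial E with _ | _
  · simp [Subsingleton.elim (1 : E) 0]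
  · exact CStarRing.norm_one.le

theorem suzukiP_mem_Icc {m : ℕ} (hm : 2 ≤ m) : suzukiP m ∈ Set.Icc 0 (1 / 2) := by
  have hexp : (1 : ℝ) / (2 * m - 1) ≤ 1 / 2 := by
    have : (2 : ℝ) ≤ m := by exact_mod_cast hm
    rw [div_le_div_iff₀ (by linarith) (by norm_num)]
    linarith
  have h4 : (4 : ℝ) ^ ((1 : ℝ) / (2 * m - 1)) ≤ 2 :=
    calc (4 : ℝ) ^ ((1 : ℝ) / (2 * m - 1)) ≤ 4 ^ ((1 : ℝ) / 2) :=
          Real.rpow_le_rpow_of_exponent_le (by norm_num) hexp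
      _ = 2 := by rw [show (4 : ℝ) = 2 ^ (2 : ℝ) by norm_num, ← Real.rpow_mul] <;> norm_num
  rw [suzukiP]
  constructor
  · exact one_div_nonneg.mpr (by linarith)
  · exact one_div_le_one_div_of_le (by norm_num) (by linarith)

section Suzuki

variable {n L : ℕ} (H : Fin L → Matrix (Fin n) (Fin n) ℂ) {Λ : ℝ}

theorem hasExpBoundedCoeffs_suzuki_one (h1 : ‖(1 : Matrix (Fin n) (Fin n) ℂ)‖ ≤ 1)
    (hΛ : ∀ i, ‖H i‖ ≤ Λ) : ∃ A, HasExpBoundedCoeffs (suzuki H 1) A (L * Λ) := by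
  have half (G : Fin L → Matrix (Fin n) (Fin n) ℂ) (hG : ∀ i, ‖G i‖ ≤ Λ) : ∃ A,
      HasExpBoundedCoeffs (fun μ => (List.ofFn fun i => NormedSpace.exp ((μ / 2) • G i)).prod)
        A (∑ _i : Fin L, Λ / 2) := by
    have hG2 (i : Fin L) : ‖(2 : ℂ)⁻¹ • G i‖ ≤ Λ / 2 := by
      rw [norm_smul, norm_inv, Complex.norm_ofNat]
      linarith [hG i]
    refine hasExpBoundedCoeffs_prod_ofFn h1 _ _ fun i =>
      ⟨_, ((hasExpBoundedCoeffs_exp h1 ((2 : ℂ)⁻¹ • G i)).mono (norm_nonneg _) (hG2 i)).congr ?_⟩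
    intro μ
    rw [smul_smul, div_eq_mul_inv]
  obtain ⟨A, hA⟩ := half H hΛ
  obtain ⟨B, hB⟩ := half (fun i => H i.rev) fun i => hΛ i.rev
  have hw : ∑ _i : Fin L, Λ / 2 + ∑ _i : Fin L, Λ / 2 = L * Λ := by
    simp only [Finset.sum_const, Finset.card_univ, Fintype.card_fin, nsmul_eq_mul]
    ring
  exact ⟨_, hw ▸ hA.mul hB⟩

theorem hasExpBoundedCoeffs_suzuki (h1 : ‖(1 : Matrix (Fin n) (Fin n) ℂ)‖ ≤ 1)
    (hΛ0 : 0 ≤ Λ) (hΛ : ∀ i, ‖H i‖ ≤ Λ) (k : ℕ) :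
    ∃ A, HasExpBoundedCoeffs (suzuki H k) A (5 ^ (k - 1) * L * Λ) := by
  obtain _ | k := k
  · exact ⟨_, (hasExpBoundedCoeffs_one h1).mono le_rfl (by positivity)⟩
  simp only [Nat.add_sub_cancel]
  induction k with
  | zero => simpa using hasExpBoundedCoeffs_suzuki_one H h1 hΛ
  | succ k ih =>
    obtain ⟨A, hA⟩ := ih
    have hw : 0 ≤ (5 : ℝ) ^ k * L * Λ := by positivity
    obtain ⟨hp0, hp⟩ := suzukiP_mem_Icc (m := k + 2) (by omega)
    have hP := (hA.comp_mul (suzukiP (k + 2))).mono (by positivity) (mul_le_of_le_one_left hw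
      (by rw [Complex.norm_real, Real.norm_of_nonneg hp0]; linarith))
    have hQ := (hA.comp_mul (1 - 4 * suzukiP (k + 2))).mono (by positivity)
      (mul_le_of_le_one_left hw (by
        rw [← Complex.ofReal_ofNat, ← Complex.ofReal_mul, ← Complex.ofReal_one,
          ← Complex.ofReal_sub, Complex.norm_real, Real.norm_eq_abs, abs_le]
        constructor <;> linarith))
    have hw5 : (5 : ℝ) ^ k * L * Λ + 5 ^ k * L * Λ + 5 ^ k * L * Λ + 5 ^ k * L * Λ +
        5 ^ k * L * Λ = 5 ^ (k + 1) * L * Λ := by ring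
    exact ⟨_, hw5 ▸ (((hP.mul hP).mul hQ).mul hP).mul hP |>.congr fun μ => by
      rw [suzuki, sq, ← mul_assoc]⟩

end Suzuki

theorem opNorm_D_le_general {n L : ℕ}
    (H : Fin L → Matrix (Fin n) (Fin n) ℂ)
    (Λ : ℝ) (hΛ : IsGreatest (Set.range fun i => ‖H i‖) Λ)
    (k : ℕ) (lam : ℂ)
    (C : ℕ → Matrix (Fin n) (Fin n) ℂ)
    (hC : ∀ μ : ℂ, HasSum (fun j : ℕ => μ ^ j • C j) (suzuki H k (μ / 2))) :
    ‖(∑' j : ℕ, lam ^ (2 * k + 1 + j) •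
          (((2 * k + 1 + j)! : ℂ)⁻¹ • ((2 : ℂ)⁻¹ • ∑ i, H i) ^ (2 * k + 1 + j))) -
        ∑' j : ℕ, lam ^ (2 * k + 1 + j) • C (2 * k + 1 + j)‖ ≤
      2 * ((2 * 5 ^ (k - 1) : ℝ) * ‖lam‖ * L * Λ / 2) ^ (2 * k + 1) /
          ((2 * k + 1)! : ℝ) *
        Real.exp ((2 * 5 ^ (k - 1) : ℝ) * ‖lam‖ * L * Λ / 2) := by
  obtain ⟨⟨i₀, hi₀⟩, hΛ_ub⟩ := hΛ
  have hΛ0 : 0 ≤ Λ := hi₀ ▸ norm_nonneg _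
  have hH (i : Fin L) : ‖H i‖ ≤ Λ := hΛ_ub ⟨i, rfl⟩
  have h1 := CStarRing.norm_one_le (E := Matrix (Fin n) (Fin n) ℂ)
  set x : ℝ := (2 * 5 ^ (k - 1) : ℝ) * ‖lam‖ * L * Λ / 2 with hx_def
  have hx : 0 ≤ x := by positivity
  have hy : ‖lam‖ * L * Λ ≤ x := by
    rw [show x = 5 ^ (k - 1) * (‖lam‖ * L * Λ) by rw [hx_def]; ring]
    exact le_mul_of_one_le_left (by positivity) (one_le_pow₀ (by norm_num))
  have hsum : ‖(2 : ℂ)⁻¹ • ∑ i, H i‖ ≤ L * Λ / 2 := by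
    rw [norm_smul, norm_inv, Complex.norm_ofNat]
    have := (norm_sum_le _ _).trans (Finset.sum_le_card_nsmul Finset.univ _ _ fun i _ => hH i)
    rw [Finset.card_univ, Fintype.card_fin, nsmul_eq_mul] at this
    linarith
  have hexp := ((hasExpBoundedCoeffs_exp h1 ((2 : ℂ)⁻¹ • ∑ i, H i)).comp_mul lam).mono
    (v := x) (by positivity) (by nlinarith [norm_nonneg lam])
  obtain ⟨A, hA⟩ := hasExpBoundedCoeffs_suzuki H h1 hΛ0 hH k
  have hsuz := (((hA.comp_mul 2⁻¹).of_hasSum (by simpa only [div_eq_inv_mul] using hC)).comp_mul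
    lam).mono (v := x) (by positivity) (by rw [norm_inv, Complex.norm_ofNat]; linarith)
  exact norm_tsum_add_sub_tsum_add_le hx hexp.norm_le hsuz.norm_le _

/-- Let `H_1, …, H_L` (`L ≥ 1`) be Hermitian `n×n` complex matrices with
`Λ := max_i ‖H_i‖`, let `k ≥ 1`, `λ ∈ ℂ` and `κ := 2·5^{k−1}`.  With
`D(λ/2) := R_{2k}(exp(λ Σ_i H_i / 2)) − R_{2k}(S^{(2k)}(λ/2))` the difference of the Taylor
remainders (in `λ`) beyond order `2k` of the exact exponential and of the `(2k)`-th order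
Trotter–Suzuki formula (whose power series in `λ` has coefficients `C_j`), we have
`‖D(λ/2)‖ ≤ 2 (κ|λ|LΛ/2)^{2k+1} / (2k+1)! · exp(κ|λ|LΛ/2)`. -/
theorem opNorm_D_le {n L : ℕ} (hL : 1 ≤ L)
    (H : Fin L → Matrix (Fin n) (Fin n) ℂ) (hH : ∀ i, (H i).IsHermitian)
    (Λ : ℝ) (hΛ : IsGreatest (Set.range fun i => ‖H i‖) Λ)
    (k : ℕ) (hk : 1 ≤ k) (lam : ℂ)
    (C : ℕ → Matrix (Fin n) (Fin n) ℂ)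
    (hC : ∀ μ : ℂ, HasSum (fun j : ℕ => μ ^ j • C j) (suzuki H k (μ / 2))) :
    ‖(∑' j : ℕ, lam ^ (2 * k + 1 + j) •
          (((2 * k + 1 + j)! : ℂ)⁻¹ • ((2 : ℂ)⁻¹ • ∑ i, H i) ^ (2 * k + 1 + j))) -
        ∑' j : ℕ, lam ^ (2 * k + 1 + j) • C (2 * k + 1 + j)‖ ≤
      2 * ((2 * 5 ^ (k - 1) : ℝ) * ‖lam‖ * L * Λ / 2) ^ (2 * k + 1) /
          ((2 * k + 1)! : ℝ) *
        Real.exp ((2 * 5 ^ (k - 1) : ℝ) * ‖lam‖ * L * Λ / 2) :=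
  opNorm_D_le_general H Λ hΛ k lam C hC
end
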